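/- Let A be a Lie affgebra with [a,a] = a for all a, and fix o ∈ A. Then [a,b]_v := [a,b] - b (difference in A_o) defines an antisymmetric bi-affine vector-valued bracket A × A → A_o. -/

import Mathlib

/-- An intrinsic affine space over a field `F`: a set with an abelian heap
operation `t` and scaled actions `act λ a b = λ ▷_a b` satisfying the axioms
of Brzeziński–Papworth. -/
structure AffSp (F : Type*) [Field F] (A : Type*) where
  t : A → A → A → A
  act : F → A → A → A
  t_assoc : ∀ a b c d e : A, t (t a b c) d e = t a b (t c d e)
  t_malcev : ∀ a b : A, t a a b = b
  t_symm : ∀ a b c : A, t a b c = t c b a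
  act_heap1 : ∀ (l m n : F) (a b : A),
    act (l - m + n) a b = t (act l a b) (act m a b) (act n a b)
  act_heap2 : ∀ (l : F) (a b c d : A),
    act l a (t b c d) = t (act l a b) (act l a c) (act l a d)
  act_mul : ∀ (l m : F) (a b : A), act (l * m) a b = act l a (act m a b)
  act_one : ∀ a b : A, act 1 a b = b
  act_zero : ∀ a b : A, act 0 a b = a
  base_change : ∀ (l : F) (a b c : A), act l a b = t (act l c b) (act l c a) a

/-- A Lie affgebra: an intrinsic affine space with a bi-affine bracket
satisfying the affine antisymmetry and affine Jacobi identities. -/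
structure LieAffgebra (F : Type*) [Field F] (A : Type*) extends AffSp F A where
  br : A → A → A
  br_left_t : ∀ a b c x : A, br (t a b c) x = t (br a x) (br b x) (br c x)
  br_left_act : ∀ (l : F) (a b x : A), br (act l a b) x = act l (br a x) (br b x)
  br_right_t : ∀ x a b c : A, br x (t a b c) = t (br x a) (br x b) (br x c)
  br_right_act : ∀ (l : F) (x a b : A), br x (act l a b) = act l (br x a) (br x b)
  br_antisym : ∀ a b : A, t (br a b) (br a a) (br b a) = br b b
  br_jacobi : ∀ a b c : A,
    t (br a (br b c)) (br a a) (t (br b (br c a)) (br b b) (br c (br a b))) = br c c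

/-!
Fixing `o`, the heap operation and the actions turn `A` into a vector space `A_o` (with
`λ a := λ ▷_o a`) in which `⟨a, b, c⟩ = a - b + c` and `λ ▷_a b = a + λ (b - a)`. In these
terms the pointwise difference of two affine maps, taken in `A_o`, is visibly affine again.
Both partial maps of `[a,b]_v` are such differences: of `[·, x]` and the constant `x`, and of
`[x, ·]` and the identity. With `[a,a] = a`, affine antisymmetry reads
`[a,b] - a + [b,a] = b`, which is antisymmetry of `[·,·]_v`.
-/

namespace AffSp

variable {F A B : Type*} [Field F]

section Retract

variable (S : AffSp F A) (o : A)

theorem t_cancel_right (a b : A) : S.t a b b = a := by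
  rw [S.t_symm]
  exact S.t_malcev b a

theorem act_self (l : F) (a : A) : S.act l a a = a := by
  simpa only [S.t_malcev] using S.base_change l a a a

abbrev retract : AddCommGroup A :=
  letI : Zero A := ⟨o⟩
  letI : Add A := ⟨fun a b => S.t a o b⟩
  letI : Neg A := ⟨fun a => S.t o a o⟩
  { add_assoc a b c := S.t_assoc a o b o c
    zero_add := S.t_malcev o
    add_zero a := S.t_cancel_right a o
    add_comm a b := S.t_symm a o b
    neg_add_cancel a := by
      change S.t (S.t o a o) o a = o
      rw [S.t_assoc, S.t_malcev, S.t_cancel_right]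
    nsmul := nsmulRec
    zsmul := zsmulRec }

abbrev retractModule : letI := S.retract o; Module F A :=
  letI := S.retract o
  { smul l a := S.act l o a
    one_smul := S.act_one o
    mul_smul l m := S.act_mul l m o
    smul_zero l := S.act_self l o
    smul_add l a b := by
      change S.act l o (S.t a o b) = S.t _ o _
      rw [S.act_heap2, S.act_self]
      rfl
    add_smul l m a := by
      have h := S.act_heap1 l 0 m o a
      rwa [sub_zero, S.act_zero] at h
    zero_smul := S.act_zero o }

theorem t_eq_sub_add (a b c : A) : letI := S.retract o; S.t a b c = a - b + c := by
  change S.t a b c = S.t (S.t a o (S.t o b o)) o c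
  rw [S.t_assoc, S.t_assoc, S.t_malcev, ← S.t_assoc a o o, S.t_cancel_right]

theorem t_eq_sub (a b : A) : letI := S.retract o; S.t a b o = a - b :=
  letI := S.retract o
  (S.t_eq_sub_add o a b o).trans (add_zero (a - b))

theorem t_eq_neg (a : A) : letI := S.retract o; S.t o a o = -a :=
  rfl

theorem act_eq_add_smul (l : F) (a b : A) :
    letI := S.retract o; letI := S.retractModule o; S.act l a b = a + l • (b - a) := by
  let := S.retract o
  let := S.retractModule o
  rw [S.base_change l a b o]
  change S.t (l • b) (l • a) a = _
  rw [S.t_eq_sub_add o, smul_sub]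
  abel

end Retract

structure IsAffineMap (S : AffSp F A) (T : AffSp F B) (f : A → B) : Prop where
  map_t : ∀ a b c : A, f (S.t a b c) = T.t (f a) (f b) (f c)
  map_act : ∀ (l : F) (a b : A), f (S.act l a b) = T.act l (f a) (f b)

theorem isAffineMap_id (S : AffSp F A) : IsAffineMap S S id :=
  ⟨fun _ _ _ => rfl, fun _ _ _ => rfl⟩

theorem isAffineMap_const (S : AffSp F A) (T : AffSp F B) (x : B) :
    IsAffineMap S T fun _ => x :=
  ⟨fun _ _ _ => (T.t_malcev x x).symm, fun l _ _ => (T.act_self l x).symm⟩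

theorem IsAffineMap.sub {S : AffSp F A} {T : AffSp F B} {f g : A → B}
    (hf : IsAffineMap S T f) (hg : IsAffineMap S T g) (o : B) :
    IsAffineMap S T fun a => T.t (f a) (g a) o := by
  let := T.retract o
  let := T.retractModule o
  constructor
  · intro a b c
    simp only [hf.map_t, hg.map_t, T.t_eq_sub_add o]
    abel
  · intro l a b
    simp only [hf.map_act, hg.map_act, T.act_eq_add_smul o, T.t_eq_sub_add o]
    module

end AffSp

namespace LieAffgebra

variable {F A : Type*} [Field F] (L : LieAffgebra F A)

theorem isAffineMap_br_left (x : A) : L.IsAffineMap L.toAffSp (L.br · x) :=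
  ⟨fun a b c => L.br_left_t a b c x, fun l a b => L.br_left_act l a b x⟩

theorem isAffineMap_br_right (x : A) : L.IsAffineMap L.toAffSp (L.br x) :=
  ⟨L.br_right_t x, fun l => L.br_right_act l x⟩

theorem t_br_right_antisymm {a b : A} (ha : L.br a a = a) (hb : L.br b b = b) (o : A) :
    L.t (L.br a b) b o = L.t o (L.t (L.br b a) a o) o := by
  let := L.retract o
  have h := L.br_antisym a b
  rw [ha, hb, L.t_eq_sub_add o] at h
  rw [L.t_eq_neg, L.t_eq_sub, L.t_eq_sub, eq_neg_iff_add_eq_zero, ← sub_eq_zero.mpr h]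
  abel

end LieAffgebra

/-- Let `A` be a Lie affgebra with `[a,a] = a` for all `a`, and fix `o ∈ A`.
Then `[a,b]_v := [a,b] - b` (difference in the group `A_o`, i.e.
`⟨[a,b], b, o⟩`) is an antisymmetric bi-affine vector-valued bracket
`A × A → A_o`. -/
theorem lie_affgebra_vector_valued_bracket
    {F A : Type*} [Field F] (L : LieAffgebra F A)
    (hidem : ∀ a : A, L.br a a = a) (o : A) :
    let neg : A → A := fun a => L.t o a o
    let brv : A → A → A := fun a b => L.t (L.br a b) b o  -- [a,b] - b in A_o
    -- bi-affine
    (∀ a b c x : A, brv (L.t a b c) x = L.t (brv a x) (brv b x) (brv c x)) ∧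
    (∀ (l : F) (a b x : A), brv (L.act l a b) x = L.act l (brv a x) (brv b x)) ∧
    (∀ x a b c : A, brv x (L.t a b c) = L.t (brv x a) (brv x b) (brv x c)) ∧
    (∀ (l : F) (x a b : A), brv x (L.act l a b) = L.act l (brv x a) (brv x b)) ∧
    -- antisymmetric
    (∀ a b : A, brv a b = neg (brv b a)) := by
  intro neg brv
  have hleft (x : A) : L.IsAffineMap L.toAffSp (brv · x) :=
    (L.isAffineMap_br_left x).sub (L.isAffineMap_const L.toAffSp x) o
  have hright (x : A) : L.IsAffineMap L.toAffSp (brv x) :=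
    (L.isAffineMap_br_right x).sub L.isAffineMap_id o
  exact ⟨fun a b c x => (hleft x).map_t a b c, fun l a b x => (hleft x).map_act l a b,
    fun x => (hright x).map_t, fun l x => (hright x).map_act l,
    fun a b => L.t_br_right_antisymm (hidem a) (hidem b) o⟩
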